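/- Let C ⊆ ℕ \ {1} be a primitive set. Assume that for any finite C-admissible sets A₁, A₂ ⊆ ℤ there exists m ∈ ℕ such that A₁ ∪ (A₂ + m) is C-admissible. Then the elements of C are pairwise coprime. -/
import Mathlib


/-- `A ⊆ ℤ` is `C`-admissible if for every `c ∈ C` there is a residue class `r` mod `c`
such that no element of `A` is congruent to `r` mod `c`. -/
def IsAdmissible (C : Set ℕ) (A : Set ℤ) : Prop :=
  ∀ c ∈ C, ∃ r : ℤ, ∀ a ∈ A, ¬ ((c : ℤ) ∣ a - r)

private lemma bezout_cong (M N u v : ℤ) (h : (Int.gcd M N : ℤ) ∣ u - v) :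
    ∃ z : ℤ, M ∣ z - u ∧ N ∣ z - v := by
  obtain ⟨w, hw⟩ := h
  have hb := Int.gcd_eq_gcd_ab M N
  refine ⟨u - M * Int.gcdA M N * w, ⟨-(Int.gcdA M N * w), by ring⟩,
    ⟨Int.gcdB M N * w, ?_⟩⟩
  have : u - v = (M * Int.gcdA M N + N * Int.gcdB M N) * w := by rw [← hb]; exact hw
  linear_combination this

private lemma lin_cong (L c δ : ℤ) (h : (Int.gcd L c : ℤ) ∣ δ) :
    ∃ t : ℤ, c ∣ L * t - δ := by
  obtain ⟨w, hw⟩ := h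
  have hb := Int.gcd_eq_gcd_ab L c
  refine ⟨Int.gcdA L c * w, ⟨-(Int.gcdB L c * w), ?_⟩⟩
  have : δ = (L * Int.gcdA L c + c * Int.gcdB L c) * w := by rw [← hb]; exact hw
  linear_combination -this

private lemma crt_finset (F : Finset ℕ) (n : ℕ → ℕ) (r : ℕ → ℤ)
    (h : ∀ x ∈ F, ∀ y ∈ F, x ≠ y → Nat.Coprime (n x) (n y)) :
    ∃ t : ℤ, ∀ c ∈ F, (n c : ℤ) ∣ t - r c := by
  classical
  induction F using Finset.induction with
  | empty => exact ⟨0, by simp⟩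
  | @insert x F hx ih =>
    obtain ⟨t0, ht0⟩ := ih (fun x hx y hy hxy => h x (Finset.mem_insert_of_mem hx)
      y (Finset.mem_insert_of_mem hy) hxy)
    have hcop : Nat.Coprime (∏ c ∈ F, n c) (n x) := by
      apply Nat.Coprime.prod_left
      intro c hc
      exact h c (Finset.mem_insert_of_mem hc) x (Finset.mem_insert_self x F)
        (by rintro rfl; exact hx hc)
    obtain ⟨z, hz1, hz2⟩ := bezout_cong (∏ c ∈ F, (n c : ℤ)) (n x) t0 (r x) (by
      have : Int.gcd (∏ c ∈ F, (n c : ℤ)) (n x) = 1 := by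
        rw [show (∏ c ∈ F, (n c : ℤ)) = ((∏ c ∈ F, n c : ℕ) : ℤ) by push_cast; ring]
        rw [Int.gcd_natCast_natCast]
        exact hcop
      rw [this]; exact one_dvd _)
    refine ⟨z, fun c hc => ?_⟩
    rcases Finset.mem_insert.mp hc with rfl | hc
    · exact hz2
    · have h1 : (n c : ℤ) ∣ z - t0 := dvd_trans (by
        exact_mod_cast Finset.dvd_prod_of_mem (fun c => (n c : ℤ)) hc) hz1
      have h2 := ht0 c hc
      have : z - r c = (z - t0) + (t0 - r c) := by ring
      rw [this]; exact dvd_add h1 h2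

private lemma pigeon (S : Finset ℤ) (c : ℕ) (h : S.card < c) :
    ∃ r : ℤ, ∀ x ∈ S, ¬ ((c:ℤ) ∣ x - r) := by
  haveI : NeZero c := ⟨by omega⟩
  obtain ⟨y, hy⟩ : ∃ y : ZMod c, y ∉ S.image (fun x : ℤ => (x : ZMod c)) := by
    by_contra hall
    push_neg at hall
    have h1 : (Finset.univ : Finset (ZMod c)) ⊆ S.image (fun x : ℤ => (x : ZMod c)) :=
      fun y _ => hall y
    have h2 := Finset.card_le_card h1
    rw [Finset.card_univ, ZMod.card] at h2
    have := Finset.card_image_le (s := S) (f := fun x : ℤ => (x : ZMod c))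
    omega
  refine ⟨(y.val : ℤ), fun x hx hdvd => hy ?_⟩
  have h0 : ((x - (y.val : ℤ) : ℤ) : ZMod c) = 0 := by
    rwa [ZMod.intCast_zmod_eq_zero_iff_dvd]
  have hxy : ((x : ℤ) : ZMod c) = y := by
    push_cast at h0
    have : ((x : ℤ) : ZMod c) = ((y.val : ℕ) : ZMod c) := by
      rw [sub_eq_zero] at h0; exact_mod_cast h0
    rw [this, ZMod.natCast_val, ZMod.cast_id]
  exact Finset.mem_image.mpr ⟨x, hx, hxy⟩

set_option maxHeartbeats 2000000 in
private lemma key_lemma (C : Set ℕ)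
    (hC2 : ∀ c ∈ C, 2 ≤ c)
    (hprim : ∀ x ∈ C, ∀ y ∈ C, x ∣ y → x = y)
    (a b : ℕ) (ha : a ∈ C) (hb : b ∈ C) (hab : a < b)
    (hgcd : 1 < Nat.gcd a b)
    (hmin : ∀ x ∈ C, ∀ y ∈ C, x ≠ y → x < b → y < b → Nat.Coprime x y)
    (h : ∀ A₁ A₂ : Set ℤ, A₁.Finite → A₂.Finite →
      IsAdmissible C A₁ → IsAdmissible C A₂ →
      ∃ m : ℕ, 0 < m ∧ IsAdmissible C (A₁ ∪ (fun x => x + (m : ℤ)) '' A₂)) : False := by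
  classical
  have ha2 : 2 ≤ a := hC2 a ha
  have hb2 : 2 ≤ b := hC2 b hb
  set d := Nat.gcd a b with hdDef
  have hda : d ∣ a := Nat.gcd_dvd_left a b
  have hdb : d ∣ b := Nat.gcd_dvd_right a b
  have hd2 : 2 ≤ d := hgcd
  have hdlta : d < a := by
    rcases lt_or_eq_of_le (Nat.le_of_dvd (by omega) hda) with h' | h'
    · exact h'
    · exfalso
      rw [h'] at hdb
      have := hprim a ha b hb hdb
      omega
  have hdltb : d < b := by omega
  set q := a / d with hqDef
  set u := b / d with huDef
  have haq : a = d * q := (Nat.mul_div_cancel' hda).symm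
  have hbu : b = d * u := (Nat.mul_div_cancel' hdb).symm
  have hq2 : 2 ≤ q := by nlinarith
  have hu2 : 2 ≤ u := by nlinarith
  have hqu : q < u := by nlinarith
  have hd1b : d + 1 < b := by nlinarith
  set p := d.minFac with hpDef
  have hp : p.Prime := Nat.minFac_prime (by omega)
  have hpd : p ∣ d := Nat.minFac_dvd d
  have hp2 : 2 ≤ p := hp.two_le
  have hpdZ : (p:ℤ) ∣ (d:ℤ) := Int.natCast_dvd_natCast.mpr hpd
  have hdaZ : (d:ℤ) ∣ (a:ℤ) := Int.natCast_dvd_natCast.mpr hda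
  have hdbZ : (d:ℤ) ∣ (b:ℤ) := Int.natCast_dvd_natCast.mpr hdb
  -- the finite set of small moduli
  set T : Set ℕ := {c | c ∈ C ∧ c < b ∧ c ≠ a} with hTDef
  have hTfin : T.Finite := (Set.finite_Iio b).subset (fun c hc => hc.2.1)
  set Tf : Finset ℕ := hTfin.toFinset with hTfDef
  have hTmem : ∀ c, c ∈ Tf ↔ (c ∈ C ∧ c < b ∧ c ≠ a) := by
    intro c
    rw [hTfDef, Set.Finite.mem_toFinset]
    rfl
  have hT2 : ∀ c ∈ Tf, 2 ≤ c := fun c hc => hC2 c ((hTmem c).mp hc).1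
  have hTgcdlt : ∀ c ∈ Tf, Nat.gcd c b < c := by
    intro c hc
    obtain ⟨hcC, hclt, _⟩ := (hTmem c).mp hc
    rcases lt_or_eq_of_le (Nat.le_of_dvd (by have := hT2 c hc; omega) (Nat.gcd_dvd_left c b)) with h' | h'
    · exact h'
    · exfalso
      have hcb : c ∣ b := h' ▸ Nat.gcd_dvd_right c b
      have := hprim c hcC b hb hcb
      omega
  have hTgcdpos : ∀ c ∈ Tf, 0 < Nat.gcd c b := fun c hc =>
    Nat.gcd_pos_of_pos_right c (by omega)
  have hTcopa : ∀ c ∈ Tf, Nat.Coprime c a := by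
    intro c hc
    obtain ⟨hcC, hclt, hcna⟩ := (hTmem c).mp hc
    exact hmin c hcC a ha hcna hclt hab
  have hTpair : ∀ x ∈ Tf, ∀ y ∈ Tf, x ≠ y → Nat.Coprime x y := by
    intro x hx y hy hxy
    obtain ⟨hxC, hxlt, _⟩ := (hTmem x).mp hx
    obtain ⟨hyC, hylt, _⟩ := (hTmem y).mp hy
    exact hmin x hxC y hyC hxy hxlt hylt
  -- master CRT lemma
  set L := Nat.lcm a b with hLDef
  have hL0 : 0 < L := Nat.pos_of_ne_zero (Nat.lcm_ne_zero (by omega) (by omega))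
  have haLZ : (a:ℤ) ∣ (L:ℤ) := Int.natCast_dvd_natCast.mpr (Nat.dvd_lcm_left a b)
  have hbLZ : (b:ℤ) ∣ (L:ℤ) := Int.natCast_dvd_natCast.mpr (Nat.dvd_lcm_right a b)
  have hgcdLc : ∀ c ∈ Tf, Nat.gcd L c ∣ Nat.gcd c b := by
    intro c hc
    have h1 : Nat.gcd L c ∣ Nat.gcd (a*b) c :=
      Nat.gcd_dvd_gcd_of_dvd_left c (Nat.lcm_dvd_mul a b)
    have h2 : Nat.gcd (a*b) c = Nat.gcd b c := by
      exact Nat.Coprime.gcd_mul_left_cancel b ((hTcopa c hc).symm)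
    rw [h2, Nat.gcd_comm b c] at h1
    exact h1
  have master : ∀ τ s : ℤ, ∃ z : ℤ, (d:ℤ) ∣ τ - s →
      ((a:ℤ) ∣ z - τ ∧ (b:ℤ) ∣ z - s ∧ ∀ c ∈ Tf, (c:ℤ) ∣ z - s % (Nat.gcd c b : ℤ)) := by
    intro τ s
    by_cases hts : (d:ℤ) ∣ τ - s
    swap
    · exact ⟨0, fun h' => absurd h' hts⟩
    obtain ⟨w, hwa, hwb⟩ := bezout_cong (a:ℤ) (b:ℤ) τ s (by
      rw [Int.gcd_natCast_natCast]
      exact hts)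
    have hsol : ∀ c : ℕ, ∃ t : ℤ, c ∈ Tf → (c:ℤ) ∣ (L:ℤ) * t - (s % (Nat.gcd c b : ℤ) - w) := by
      intro c
      by_cases hc : c ∈ Tf
      swap
      · exact ⟨0, fun h' => absurd h' hc⟩
      have hecdvd : (Nat.gcd c b : ℤ) ∣ s % (Nat.gcd c b : ℤ) - w := by
        have h1 : (Nat.gcd c b : ℤ) ∣ s % (Nat.gcd c b : ℤ) - s :=
          ⟨-(s / (Nat.gcd c b : ℤ)), by rw [Int.emod_def]; ring⟩
        have h2 : (Nat.gcd c b : ℤ) ∣ s - w := by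
          have h3 : (Nat.gcd c b : ℤ) ∣ (b:ℤ) :=
            Int.natCast_dvd_natCast.mpr (Nat.gcd_dvd_right c b)
          have h4 : (b:ℤ) ∣ s - w := by
            have h5 := dvd_neg.mpr hwb
            simpa using h5
          exact dvd_trans h3 h4
        have h5 := dvd_add h1 h2
        have h6 : s % (Nat.gcd c b : ℤ) - s + (s - w) = s % (Nat.gcd c b : ℤ) - w := by ring
        rwa [h6] at h5
      obtain ⟨t, ht⟩ := lin_cong (L:ℤ) (c:ℤ) (s % (Nat.gcd c b : ℤ) - w) (by
        have h7 : (Int.gcd (L:ℤ) (c:ℤ) : ℤ) ∣ (Nat.gcd c b : ℤ) := by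
          rw [Int.gcd_natCast_natCast]
          exact_mod_cast hgcdLc c hc
        exact dvd_trans h7 hecdvd)
      exact ⟨t, fun _ => ht⟩
    choose tf htf using hsol
    obtain ⟨t, ht⟩ := crt_finset Tf (fun c => c / Nat.gcd L c) tf (by
      intro x hx y hy hxy
      have hcop := hTpair x hx y hy hxy
      exact Nat.Coprime.coprime_dvd_right (Nat.div_dvd_of_dvd (Nat.gcd_dvd_right L y))
        (Nat.Coprime.coprime_dvd_left (Nat.div_dvd_of_dvd (Nat.gcd_dvd_right L x)) hcop))
    refine ⟨w + (L:ℤ) * t, fun _ => ⟨?_, ?_, ?_⟩⟩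
    · have he : w + (L:ℤ)*t - τ = (w - τ) + (L:ℤ) * t := by ring
      rw [he]
      exact dvd_add hwa (Dvd.dvd.mul_right haLZ t)
    · have he : w + (L:ℤ)*t - s = (w - s) + (L:ℤ) * t := by ring
      rw [he]
      exact dvd_add hwb (Dvd.dvd.mul_right hbLZ t)
    · intro c hc
      have h1 : (c:ℤ) ∣ (L:ℤ) * tf c - (s % (Nat.gcd c b:ℤ) - w) := htf c hc
      have h2 : (c:ℤ) ∣ (L:ℤ) * (t - tf c) := by
        have hgc : Nat.gcd L c ∣ c := Nat.gcd_dvd_right L c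
        have hgL : Nat.gcd L c ∣ L := Nat.gcd_dvd_left L c
        have hgpos : 0 < Nat.gcd L c :=
          Nat.gcd_pos_of_pos_right L (by have := hT2 c hc; omega)
        obtain ⟨L2, hL2⟩ := hgL
        obtain ⟨c2, hc2⟩ := hgc
        have hdivc : c / Nat.gcd L c = c2 := by
          nth_rewrite 1 [hc2]
          exact Nat.mul_div_cancel_left c2 hgpos
        obtain ⟨k, hk⟩ := ht c hc
        rw [hdivc] at hk
        refine ⟨(L2:ℤ) * k, ?_⟩
        have hL2Z : (L:ℤ) = (Nat.gcd L c : ℤ) * (L2:ℤ) := by exact_mod_cast hL2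
        have hc2Z : (c:ℤ) = (Nat.gcd L c : ℤ) * (c2:ℤ) := by exact_mod_cast hc2
        rw [hk, hL2Z, hc2Z]
        ring
      have he : w + (L:ℤ)*t - s % (Nat.gcd c b:ℤ) =
          ((L:ℤ) * tf c - (s % (Nat.gcd c b:ℤ) - w)) + (L:ℤ)*(t - tf c) := by ring
      rw [he]
      exact dvd_add h1 h2
  choose Z hZ using master
  -- the two sets
  set S1 : Finset ℤ := (((Finset.range d).filter fun δ : ℕ => ¬ (p:ℤ) ∣ (δ:ℤ)) ×ˢ Finset.range u).image
      (fun x : ℕ × ℕ => Z ((x.1:ℤ) + (d:ℤ) * ((x.2 % q : ℕ):ℤ)) ((x.1:ℤ) + (d:ℤ) * (x.2:ℤ))) with hS1Def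
  have hS1mem : ∀ x : ℤ, x ∈ S1 ↔ ∃ δ j : ℕ, δ < d ∧ ¬ (p:ℤ) ∣ (δ:ℤ) ∧ j < u ∧
      x = Z ((δ:ℤ) + (d:ℤ) * ((j % q : ℕ):ℤ)) ((δ:ℤ) + (d:ℤ) * (j:ℤ)) := by
    intro x
    rw [hS1Def, Finset.mem_image]
    constructor
    · rintro ⟨⟨δ, j⟩, hmem, rfl⟩
      simp only [Finset.mem_product, Finset.mem_filter, Finset.mem_range] at hmem
      exact ⟨δ, j, hmem.1.1, hmem.1.2, hmem.2, rfl⟩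
    · rintro ⟨δ, j, h1, h2, h3, rfl⟩
      refine ⟨(δ, j), ?_, rfl⟩
      simp only [Finset.mem_product, Finset.mem_filter, Finset.mem_range]
      exact ⟨⟨h1, h2⟩, h3⟩
  set S21 : Finset ℤ := (((Finset.range d).filter fun δ : ℕ =>
        ¬ (p:ℤ) ∣ (δ:ℤ) ∧ ¬ (p:ℤ) ∣ ((δ:ℤ) - 1)) ×ˢ Finset.range u).image
      (fun x : ℕ × ℕ => Z ((x.1:ℤ) + (d:ℤ) * ((x.2 % q : ℕ):ℤ)) ((x.1:ℤ) + (d:ℤ) * (x.2:ℤ))) with hS21Def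
  set S22 : Finset ℤ := (((Finset.range d).filter fun δ : ℕ => (p:ℤ) ∣ (δ:ℤ)) ×ˢ Finset.range u).image
      (fun x : ℕ × ℕ => Z (if x.1 = 0 then (d:ℤ) else (x.1:ℤ)) ((x.1:ℤ) + (d:ℤ) * (x.2:ℤ))) with hS22Def
  set S23 : Finset ℤ := (((Finset.range d).filter fun δ : ℕ => (p:ℤ) ∣ ((δ:ℤ) - 1)) ×ˢ Finset.range q).image
      (fun x : ℕ × ℕ => Z ((x.1:ℤ) + (d:ℤ) * (x.2:ℤ)) (x.1:ℤ)) with hS23Def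
  set S2 : Finset ℤ := S21 ∪ S22 ∪ S23 with hS2Def
  have hS21mem : ∀ x : ℤ, x ∈ S21 ↔ ∃ δ j : ℕ, δ < d ∧ (¬ (p:ℤ) ∣ (δ:ℤ) ∧ ¬ (p:ℤ) ∣ ((δ:ℤ) - 1)) ∧ j < u ∧
      x = Z ((δ:ℤ) + (d:ℤ) * ((j % q : ℕ):ℤ)) ((δ:ℤ) + (d:ℤ) * (j:ℤ)) := by
    intro x
    rw [hS21Def, Finset.mem_image]
    constructor
    · rintro ⟨⟨δ, j⟩, hmem, rfl⟩
      simp only [Finset.mem_product, Finset.mem_filter, Finset.mem_range] at hmem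
      exact ⟨δ, j, hmem.1.1, hmem.1.2, hmem.2, rfl⟩
    · rintro ⟨δ, j, h1, h2, h3, rfl⟩
      refine ⟨(δ, j), ?_, rfl⟩
      simp only [Finset.mem_product, Finset.mem_filter, Finset.mem_range]
      exact ⟨⟨h1, h2⟩, h3⟩
  have hS22mem : ∀ x : ℤ, x ∈ S22 ↔ ∃ δ j : ℕ, δ < d ∧ (p:ℤ) ∣ (δ:ℤ) ∧ j < u ∧
      x = Z (if δ = 0 then (d:ℤ) else (δ:ℤ)) ((δ:ℤ) + (d:ℤ) * (j:ℤ)) := by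
    intro x
    rw [hS22Def, Finset.mem_image]
    constructor
    · rintro ⟨⟨δ, j⟩, hmem, rfl⟩
      simp only [Finset.mem_product, Finset.mem_filter, Finset.mem_range] at hmem
      exact ⟨δ, j, hmem.1.1, hmem.1.2, hmem.2, rfl⟩
    · rintro ⟨δ, j, h1, h2, h3, rfl⟩
      refine ⟨(δ, j), ?_, rfl⟩
      simp only [Finset.mem_product, Finset.mem_filter, Finset.mem_range]
      exact ⟨⟨h1, h2⟩, h3⟩
  have hS23mem : ∀ x : ℤ, x ∈ S23 ↔ ∃ δ j : ℕ, δ < d ∧ (p:ℤ) ∣ ((δ:ℤ) - 1) ∧ j < q ∧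
      x = Z ((δ:ℤ) + (d:ℤ) * (j:ℤ)) (δ:ℤ) := by
    intro x
    rw [hS23Def, Finset.mem_image]
    constructor
    · rintro ⟨⟨δ, j⟩, hmem, rfl⟩
      simp only [Finset.mem_product, Finset.mem_filter, Finset.mem_range] at hmem
      exact ⟨δ, j, hmem.1.1, hmem.1.2, hmem.2, rfl⟩
    · rintro ⟨δ, j, h1, h2, h3, rfl⟩
      refine ⟨(δ, j), ?_, rfl⟩
      simp only [Finset.mem_product, Finset.mem_filter, Finset.mem_range]
      exact ⟨⟨h1, h2⟩, h3⟩
  have hS2mem : ∀ x : ℤ, x ∈ S2 ↔ x ∈ S21 ∨ x ∈ S22 ∨ x ∈ S23 := by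
    intro x
    rw [hS2Def, Finset.mem_union, Finset.mem_union]
    tauto
  -- divisibility certificates for applying hZ
  have hdvd1 : ∀ δ j : ℕ, (d:ℤ) ∣ ((δ:ℤ) + (d:ℤ) * ((j % q : ℕ):ℤ)) - ((δ:ℤ) + (d:ℤ) * (j:ℤ)) :=
    fun δ j => ⟨((j % q : ℕ):ℤ) - (j:ℤ), by ring⟩
  have hdvd2 : ∀ δ j : ℕ, (d:ℤ) ∣ (if δ = 0 then (d:ℤ) else (δ:ℤ)) - ((δ:ℤ) + (d:ℤ) * (j:ℤ)) := by
    intro δ j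
    by_cases h0 : δ = 0
    · subst h0
      simp only [if_pos rfl]
      exact ⟨1 - (j:ℤ), by push_cast; ring⟩
    · rw [if_neg h0]
      exact ⟨-(j:ℤ), by ring⟩
  have hdvd3 : ∀ δ j : ℕ, (d:ℤ) ∣ ((δ:ℤ) + (d:ℤ) * (j:ℤ)) - (δ:ℤ) :=
    fun δ j => ⟨(j:ℤ), by ring⟩
  -- hitting a residue class
  have hitmod : ∀ (k : ℕ), 0 < k → ∀ (ρ : ℤ) (δ : ℕ), (d:ℤ) ∣ ρ - (δ:ℤ) →
      ∃ j : ℕ, j < k ∧ ((d:ℤ) * (k:ℤ)) ∣ ((δ:ℤ) + (d:ℤ)*(j:ℤ)) - ρ := by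
    rintro k hk ρ δ ⟨η, hη⟩
    have hkZ : (0:ℤ) < (k:ℤ) := by exact_mod_cast hk
    have h1 : 0 ≤ η % (k:ℤ) := Int.emod_nonneg η (by omega)
    have h2 : η % (k:ℤ) < (k:ℤ) := Int.emod_lt_of_pos η hkZ
    refine ⟨(η % (k:ℤ)).toNat, by omega, ?_⟩
    have htn : (((η % (k:ℤ)).toNat : ℕ) : ℤ) = η % (k:ℤ) := Int.toNat_of_nonneg h1
    refine ⟨-(η / (k:ℤ)), ?_⟩
    rw [htn, Int.emod_def]
    linear_combination -hη
  -- small helper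
  have hδ0 : ∀ δ : ℕ, δ < d → (d:ℤ) ∣ (δ:ℤ) → δ = 0 := fun δ h1 h2 =>
    Nat.eq_zero_of_dvd_of_lt (Int.natCast_dvd_natCast.mp h2) h1
  -- cardinality bounds
  have hS1card : S1.card ≤ b := by
    rw [hS1Def]
    refine le_trans Finset.card_image_le ?_
    rw [Finset.card_product, Finset.card_range]
    have h1 := Finset.card_filter_le (Finset.range d) (fun δ : ℕ => ¬ (p:ℤ) ∣ (δ:ℤ))
    rw [Finset.card_range] at h1
    calc ((Finset.range d).filter fun δ : ℕ => ¬ (p:ℤ) ∣ (δ:ℤ)).card * u ≤ d * u :=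
          Nat.mul_le_mul_right u h1
      _ = b := hbu.symm
  have hS2card : S2.card ≤ b := by
    set F1 : Finset ℕ := (Finset.range d).filter fun δ : ℕ =>
        ¬ (p:ℤ) ∣ (δ:ℤ) ∧ ¬ (p:ℤ) ∣ ((δ:ℤ) - 1) with hF1Def
    set F2 : Finset ℕ := (Finset.range d).filter fun δ : ℕ => (p:ℤ) ∣ (δ:ℤ) with hF2Def
    set F3 : Finset ℕ := (Finset.range d).filter fun δ : ℕ => (p:ℤ) ∣ ((δ:ℤ) - 1) with hF3Def
    have hc21 : S21.card ≤ F1.card * u := by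
      rw [hS21Def]
      refine le_trans Finset.card_image_le ?_
      rw [Finset.card_product, Finset.card_range]
    have hc22 : S22.card ≤ F2.card * u := by
      rw [hS22Def]
      refine le_trans Finset.card_image_le ?_
      rw [Finset.card_product, Finset.card_range]
    have hc23 : S23.card ≤ F3.card * q := by
      rw [hS23Def]
      refine le_trans Finset.card_image_le ?_
      rw [Finset.card_product, Finset.card_range]
    have hdisj1 : Disjoint F1 F2 := by
      rw [Finset.disjoint_left]
      intro x hx1 hx2
      rw [hF1Def, Finset.mem_filter] at hx1
      rw [hF2Def, Finset.mem_filter] at hx2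
      exact hx1.2.1 hx2.2
    have hdisj2 : Disjoint (F1 ∪ F2) F3 := by
      rw [Finset.disjoint_left]
      intro x hx1 hx3
      rw [Finset.mem_union] at hx1
      rw [hF3Def, Finset.mem_filter] at hx3
      rcases hx1 with h | h
      · rw [hF1Def, Finset.mem_filter] at h
        exact h.2.2 hx3.2
      · rw [hF2Def, Finset.mem_filter] at h
        have h1 : (p:ℤ) ∣ 1 := by
          have h2 := dvd_sub h.2 hx3.2
          simpa using h2
        have h3 : (p:ℕ) ∣ 1 := by exact_mod_cast h1
        have := Nat.le_of_dvd one_pos h3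
        omega
    have hsum : F1.card + F2.card + F3.card ≤ d := by
      have h1 := Finset.card_union_of_disjoint hdisj2
      have h12 := Finset.card_union_of_disjoint hdisj1
      have h2 : F1 ∪ F2 ∪ F3 ⊆ Finset.range d := by
        refine Finset.union_subset (Finset.union_subset ?_ ?_) ?_
        · rw [hF1Def]; exact Finset.filter_subset _ _
        · rw [hF2Def]; exact Finset.filter_subset _ _
        · rw [hF3Def]; exact Finset.filter_subset _ _
      have h3 := Finset.card_le_card h2
      rw [h1, h12, Finset.card_range] at h3
      omega
    have htot : S2.card ≤ S21.card + S22.card + S23.card := by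
      rw [hS2Def]
      refine le_trans (Finset.card_union_le _ _) ?_
      exact Nat.add_le_add_right (Finset.card_union_le _ _) _
    have hqleu : q ≤ u := le_of_lt hqu
    have h31 : F3.card * q ≤ F3.card * u := Nat.mul_le_mul_left _ hqleu
    have hmul : (F1.card + F2.card + F3.card) * u ≤ d * u := Nat.mul_le_mul_right u hsum
    have hdist : (F1.card + F2.card + F3.card) * u = F1.card * u + F2.card * u + F3.card * u := by
      ring
    have hb' : b = d * u := hbu
    omega
  -- avoided residue for the small moduli
  have hS1cert : ∀ x ∈ S1, ∃ τ s : ℤ, (d:ℤ) ∣ τ - s ∧ x = Z τ s := by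
    intro x hx
    obtain ⟨δ, j, _, _, _, rfl⟩ := (hS1mem x).mp hx
    exact ⟨_, _, hdvd1 δ j, rfl⟩
  have hS2cert : ∀ x ∈ S2, ∃ τ s : ℤ, (d:ℤ) ∣ τ - s ∧ x = Z τ s := by
    intro x hx
    rcases (hS2mem x).mp hx with h | h | h
    · obtain ⟨δ, j, _, _, _, rfl⟩ := (hS21mem x).mp h
      exact ⟨_, _, hdvd1 δ j, rfl⟩
    · obtain ⟨δ, j, _, _, _, rfl⟩ := (hS22mem x).mp h
      exact ⟨_, _, hdvd2 δ j, rfl⟩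
    · obtain ⟨δ, j, _, _, _, rfl⟩ := (hS23mem x).mp h
      exact ⟨_, _, hdvd3 δ j, rfl⟩
  have hTavoid : ∀ S : Finset ℤ, (∀ x ∈ S, ∃ τ s : ℤ, (d:ℤ) ∣ τ - s ∧ x = Z τ s) →
      ∀ c ∈ Tf, ∃ r : ℤ, ∀ x ∈ S, ¬ ((c:ℤ) ∣ x - r) := by
    intro S hS c hc
    refine ⟨(Nat.gcd c b : ℤ), fun x hx hdvd => ?_⟩
    obtain ⟨τ, s, hts, rfl⟩ := hS x hx
    have hspec := (hZ τ s hts).2.2 c hc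
    have h1 : (c:ℤ) ∣ (Nat.gcd c b : ℤ) - s % (Nat.gcd c b : ℤ) := by
      have h2 := dvd_sub hspec hdvd
      have h3 : Z τ s - s % (Nat.gcd c b : ℤ) - (Z τ s - (Nat.gcd c b : ℤ)) =
          (Nat.gcd c b : ℤ) - s % (Nat.gcd c b : ℤ) := by ring
      rwa [h3] at h2
    have hepos : (0:ℤ) < (Nat.gcd c b : ℤ) := by exact_mod_cast hTgcdpos c hc
    have h2 : 0 ≤ s % (Nat.gcd c b : ℤ) := Int.emod_nonneg s (by omega)
    have h3 : s % (Nat.gcd c b : ℤ) < (Nat.gcd c b : ℤ) := Int.emod_lt_of_pos s hepos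
    have h5 := Int.le_of_dvd (by omega) h1
    have h6 : (Nat.gcd c b : ℤ) < (c:ℤ) := by exact_mod_cast hTgcdlt c hc
    omega
  -- admissibility of S1
  have hadm1 : IsAdmissible C (↑S1) := by
    intro c hc
    rcases lt_trichotomy c b with hlt | hEq | hgt
    · rcases eq_or_ne c a with hEqa | hne
      · subst hEqa
        refine ⟨0, fun x hx hdvd => ?_⟩
        obtain ⟨δ, j, hδd, hpδ, hju, rfl⟩ := (hS1mem x).mp (Finset.mem_coe.mp hx)
        have hspec := (hZ _ _ (hdvd1 δ j)).1
        have hdvd' : (c:ℤ) ∣ Z ((δ:ℤ) + (d:ℤ) * ((j % q : ℕ):ℤ)) ((δ:ℤ) + (d:ℤ) * (j:ℤ)) := by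
          simpa using hdvd
        have hτ : (c:ℤ) ∣ ((δ:ℤ) + (d:ℤ) * ((j % q : ℕ):ℤ)) := by
          have h1 := dvd_sub hdvd' hspec
          simpa using h1
        have hdδ : (d:ℤ) ∣ (δ:ℤ) := by
          have h2 := dvd_trans hdaZ hτ
          have h3 : (d:ℤ) ∣ (d:ℤ) * ((j % q : ℕ):ℤ) := Dvd.intro _ rfl
          have h4 := dvd_sub h2 h3
          simpa using h4
        have h5 : δ = 0 := hδ0 δ hδd hdδ
        rw [h5] at hpδ
        exact hpδ (by simp)
      · obtain ⟨r, hr⟩ := hTavoid S1 hS1cert c ((hTmem c).mpr ⟨hc, hlt, hne⟩)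
        exact ⟨r, fun x hx => hr x (Finset.mem_coe.mp hx)⟩
    · subst hEq
      refine ⟨0, fun x hx hdvd => ?_⟩
      obtain ⟨δ, j, hδd, hpδ, hju, rfl⟩ := (hS1mem x).mp (Finset.mem_coe.mp hx)
      have hspec := (hZ _ _ (hdvd1 δ j)).2.1
      have hdvd' : (c:ℤ) ∣ Z ((δ:ℤ) + (d:ℤ) * ((j % q : ℕ):ℤ)) ((δ:ℤ) + (d:ℤ) * (j:ℤ)) := by
        simpa using hdvd
      have hs : (c:ℤ) ∣ ((δ:ℤ) + (d:ℤ) * (j:ℤ)) := by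
        have h1 := dvd_sub hdvd' hspec
        simpa using h1
      have hdδ : (d:ℤ) ∣ (δ:ℤ) := by
        have h2 := dvd_trans hdbZ hs
        have h3 : (d:ℤ) ∣ (d:ℤ) * (j:ℤ) := Dvd.intro _ rfl
        have h4 := dvd_sub h2 h3
        simpa using h4
      have h5 : δ = 0 := hδ0 δ hδd hdδ
      rw [h5] at hpδ
      exact hpδ (by simp)
    · obtain ⟨r, hr⟩ := pigeon S1 c (by omega)
      exact ⟨r, fun x hx => hr x (Finset.mem_coe.mp hx)⟩
  -- admissibility of S2
  have hadm2 : IsAdmissible C (↑S2) := by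
    intro c hc
    rcases lt_trichotomy c b with hlt | hEq | hgt
    · rcases eq_or_ne c a with hEqa | hne
      · subst hEqa
        refine ⟨0, fun x hx hdvd => ?_⟩
        rcases (hS2mem x).mp (Finset.mem_coe.mp hx) with hm | hm | hm
        · obtain ⟨δ, j, hδd, ⟨hpδ, _⟩, hju, hxe⟩ := (hS21mem x).mp hm
          subst hxe
          have hspec := (hZ _ _ (hdvd1 δ j)).1
          have hdvd' : (c:ℤ) ∣ Z ((δ:ℤ) + (d:ℤ) * ((j % q : ℕ):ℤ)) ((δ:ℤ) + (d:ℤ) * (j:ℤ)) := by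
            simpa using hdvd
          have hτ : (c:ℤ) ∣ ((δ:ℤ) + (d:ℤ) * ((j % q : ℕ):ℤ)) := by
            have h1 := dvd_sub hdvd' hspec
            simpa using h1
          have hdδ : (d:ℤ) ∣ (δ:ℤ) := by
            have h2 := dvd_trans hdaZ hτ
            have h3 : (d:ℤ) ∣ (d:ℤ) * ((j % q : ℕ):ℤ) := Dvd.intro _ rfl
            have h4 := dvd_sub h2 h3
            simpa using h4
          have h5 : δ = 0 := hδ0 δ hδd hdδ
          rw [h5] at hpδ
          exact hpδ (by simp)
        · obtain ⟨δ, j, hδd, hpδ, hju, hxe⟩ := (hS22mem x).mp hm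
          subst hxe
          have hspec := (hZ _ _ (hdvd2 δ j)).1
          have hdvd' : (c:ℤ) ∣ Z (if δ = 0 then (d:ℤ) else (δ:ℤ)) ((δ:ℤ) + (d:ℤ) * (j:ℤ)) := by
            simpa using hdvd
          have hτ : (c:ℤ) ∣ (if δ = 0 then (d:ℤ) else (δ:ℤ)) := by
            have h1 := dvd_sub hdvd' hspec
            simpa using h1
          by_cases h0 : δ = 0
          · rw [if_pos h0] at hτ
            have h6 := Int.le_of_dvd (by exact_mod_cast (by omega : 0 < d)) hτ
            have h7 : c ≤ d := by exact_mod_cast h6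
            omega
          · rw [if_neg h0] at hτ
            have hδpos : (0:ℤ) < (δ:ℤ) := by exact_mod_cast Nat.pos_of_ne_zero h0
            have h6 := Int.le_of_dvd hδpos hτ
            have h7 : c ≤ δ := by exact_mod_cast h6
            omega
        · obtain ⟨δ, j, hδd, hpδ, hjq, hxe⟩ := (hS23mem x).mp hm
          subst hxe
          have hspec := (hZ _ _ (hdvd3 δ j)).1
          have hdvd' : (c:ℤ) ∣ Z ((δ:ℤ) + (d:ℤ) * (j:ℤ)) (δ:ℤ) := by
            simpa using hdvd
          have hτ : (c:ℤ) ∣ ((δ:ℤ) + (d:ℤ) * (j:ℤ)) := by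
            have h1 := dvd_sub hdvd' hspec
            simpa using h1
          have hdδ : (d:ℤ) ∣ (δ:ℤ) := by
            have h2 := dvd_trans hdaZ hτ
            have h3 : (d:ℤ) ∣ (d:ℤ) * (j:ℤ) := Dvd.intro _ rfl
            have h4 := dvd_sub h2 h3
            simpa using h4
          have h5 : δ = 0 := hδ0 δ hδd hdδ
          rw [h5] at hpδ
          have h8 : (p:ℤ) ∣ 1 := by
            have h9 := dvd_neg.mpr hpδ
            simpa using h9
          have h10 : (p:ℕ) ∣ 1 := by exact_mod_cast h8
          have := Nat.le_of_dvd one_pos h10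
          omega
      · obtain ⟨r, hr⟩ := hTavoid S2 hS2cert c ((hTmem c).mpr ⟨hc, hlt, hne⟩)
        exact ⟨r, fun x hx => hr x (Finset.mem_coe.mp hx)⟩
    · subst hEq
      refine ⟨1 + (d:ℤ), fun x hx hdvd => ?_⟩
      rcases (hS2mem x).mp (Finset.mem_coe.mp hx) with hm | hm | hm
      · obtain ⟨δ, j, hδd, ⟨_, hpδ1⟩, hju, hxe⟩ := (hS21mem x).mp hm
        subst hxe
        have hspec := (hZ _ _ (hdvd1 δ j)).2.1
        have hs : (c:ℤ) ∣ ((δ:ℤ) + (d:ℤ)*(j:ℤ)) - (1 + (d:ℤ)) := by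
          have h1 := dvd_sub hspec hdvd
          have h2 : Z ((δ:ℤ) + (d:ℤ) * ((j % q : ℕ):ℤ)) ((δ:ℤ) + (d:ℤ) * (j:ℤ)) -
              ((δ:ℤ) + (d:ℤ) * (j:ℤ)) -
              (Z ((δ:ℤ) + (d:ℤ) * ((j % q : ℕ):ℤ)) ((δ:ℤ) + (d:ℤ) * (j:ℤ)) - (1 + (d:ℤ))) =
              -(((δ:ℤ) + (d:ℤ)*(j:ℤ)) - (1 + (d:ℤ))) := by ring
          rw [h2] at h1
          exact (dvd_neg.mp h1)
        have hdδ : (d:ℤ) ∣ (δ:ℤ) - 1 := by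
          have h2 := dvd_trans hdbZ hs
          have h3 : (d:ℤ) ∣ (d:ℤ)*(j:ℤ) - (d:ℤ) := ⟨(j:ℤ) - 1, by ring⟩
          have h4 := dvd_sub h2 h3
          have h5 : ((δ:ℤ) + (d:ℤ)*(j:ℤ)) - (1 + (d:ℤ)) - ((d:ℤ)*(j:ℤ) - (d:ℤ)) = (δ:ℤ) - 1 := by
            ring
          rwa [h5] at h4
        have hδ1 : δ = 1 := by
          obtain ⟨k, hk⟩ := hdδ
          have hδdZ : (δ:ℤ) < (d:ℤ) := by exact_mod_cast hδd
          have hd2Z : (2:ℤ) ≤ (d:ℤ) := by exact_mod_cast hd2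
          have h0 : (0:ℤ) ≤ (δ:ℤ) := Int.natCast_nonneg δ
          have hk0 : k = 0 := by
            by_contra hkne
            rcases lt_or_gt_of_ne hkne with hneg | hpos
            · have hklt : k ≤ -1 := by omega
              nlinarith
            · have hkge : 1 ≤ k := by omega
              nlinarith
          rw [hk0, mul_zero] at hk
          omega
        rw [hδ1] at hpδ1
        exact hpδ1 (by simp)
      · obtain ⟨δ, j, hδd, hpδ, hju, hxe⟩ := (hS22mem x).mp hm
        subst hxe
        have hspec := (hZ _ _ (hdvd2 δ j)).2.1
        have hs : (c:ℤ) ∣ ((δ:ℤ) + (d:ℤ)*(j:ℤ)) - (1 + (d:ℤ)) := by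
          have h1 := dvd_sub hspec hdvd
          have h2 : Z (if δ = 0 then (d:ℤ) else (δ:ℤ)) ((δ:ℤ) + (d:ℤ) * (j:ℤ)) -
              ((δ:ℤ) + (d:ℤ) * (j:ℤ)) -
              (Z (if δ = 0 then (d:ℤ) else (δ:ℤ)) ((δ:ℤ) + (d:ℤ) * (j:ℤ)) - (1 + (d:ℤ))) =
              -(((δ:ℤ) + (d:ℤ)*(j:ℤ)) - (1 + (d:ℤ))) := by ring
          rw [h2] at h1
          exact (dvd_neg.mp h1)
        have hdδ : (d:ℤ) ∣ (δ:ℤ) - 1 := by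
          have h2 := dvd_trans hdbZ hs
          have h3 : (d:ℤ) ∣ (d:ℤ)*(j:ℤ) - (d:ℤ) := ⟨(j:ℤ) - 1, by ring⟩
          have h4 := dvd_sub h2 h3
          have h5 : ((δ:ℤ) + (d:ℤ)*(j:ℤ)) - (1 + (d:ℤ)) - ((d:ℤ)*(j:ℤ) - (d:ℤ)) = (δ:ℤ) - 1 := by
            ring
          rwa [h5] at h4
        have hδ1 : δ = 1 := by
          obtain ⟨k, hk⟩ := hdδ
          have hδdZ : (δ:ℤ) < (d:ℤ) := by exact_mod_cast hδd
          have hd2Z : (2:ℤ) ≤ (d:ℤ) := by exact_mod_cast hd2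
          have h0 : (0:ℤ) ≤ (δ:ℤ) := Int.natCast_nonneg δ
          have hk0 : k = 0 := by
            by_contra hkne
            rcases lt_or_gt_of_ne hkne with hneg | hpos
            · have hklt : k ≤ -1 := by omega
              nlinarith
            · have hkge : 1 ≤ k := by omega
              nlinarith
          rw [hk0, mul_zero] at hk
          omega
        rw [hδ1] at hpδ
        have h8 : (p:ℕ) ∣ 1 := by exact_mod_cast hpδ
        have := Nat.le_of_dvd one_pos h8
        omega
      · obtain ⟨δ, j, hδd, hpδ, hjq, hxe⟩ := (hS23mem x).mp hm
        subst hxe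
        have hspec := (hZ _ _ (hdvd3 δ j)).2.1
        have hs : (c:ℤ) ∣ (δ:ℤ) - (1 + (d:ℤ)) := by
          have h1 := dvd_sub hspec hdvd
          have h2 : Z ((δ:ℤ) + (d:ℤ) * (j:ℤ)) (δ:ℤ) - (δ:ℤ) -
              (Z ((δ:ℤ) + (d:ℤ) * (j:ℤ)) (δ:ℤ) - (1 + (d:ℤ))) =
              -((δ:ℤ) - (1 + (d:ℤ))) := by ring
          rw [h2] at h1
          exact (dvd_neg.mp h1)
        have hneg : (c:ℤ) ∣ (1 + (d:ℤ)) - (δ:ℤ) := by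
          have := dvd_neg.mpr hs
          simpa using this
        have hδdZ : (δ:ℤ) < (d:ℤ) := by exact_mod_cast hδd
        have h0 : (0:ℤ) ≤ (δ:ℤ) := Int.natCast_nonneg δ
        have hpos : (0:ℤ) < (1 + (d:ℤ)) - (δ:ℤ) := by omega
        have h6 := Int.le_of_dvd hpos hneg
        have hd1bZ : (d:ℤ) + 1 < (c:ℤ) := by exact_mod_cast hd1b
        omega
    · obtain ⟨r, hr⟩ := pigeon S2 c (by omega)
      exact ⟨r, fun x hx => hr x (Finset.mem_coe.mp hx)⟩
  -- extracting the residue class mod d of a target residue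
  have hgetδ : ∀ ρ : ℤ, ∃ δ : ℕ, δ < d ∧ (d:ℤ) ∣ ρ - (δ:ℤ) := by
    intro ρ
    have hd0 : (0:ℤ) < (d:ℤ) := by exact_mod_cast (by omega : 0 < d)
    have h1 : 0 ≤ ρ % (d:ℤ) := Int.emod_nonneg ρ (by omega)
    have h2 : ρ % (d:ℤ) < (d:ℤ) := Int.emod_lt_of_pos ρ hd0
    refine ⟨(ρ % (d:ℤ)).toNat, by omega, ?_⟩
    have htn : (((ρ % (d:ℤ)).toNat : ℕ):ℤ) = ρ % (d:ℤ) := Int.toNat_of_nonneg h1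
    rw [htn, Int.emod_def]
    exact ⟨ρ / (d:ℤ), by ring⟩
  have haqZ : (a:ℤ) = (d:ℤ) * (q:ℤ) := by exact_mod_cast haq
  have hbuZ : (b:ℤ) = (d:ℤ) * (u:ℤ) := by exact_mod_cast hbu
  -- coverage lemmas
  have cov1a : ∀ ρ : ℤ, (∀ x ∈ S1, ¬ ((a:ℤ) ∣ x - ρ)) → (p:ℤ) ∣ ρ := by
    intro ρ havoid
    by_contra hpρ
    obtain ⟨δ, hδd, hdρδ⟩ := hgetδ ρ
    have hpδρ : (p:ℤ) ∣ ρ - (δ:ℤ) := dvd_trans hpdZ hdρδ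
    have hpδ : ¬ (p:ℤ) ∣ (δ:ℤ) := fun hcon => hpρ (by
      have := dvd_add hpδρ hcon
      simpa using this)
    obtain ⟨j, hjq, hjdvd⟩ := hitmod q (by omega) ρ δ hdρδ
    have hmem : Z ((δ:ℤ) + (d:ℤ) * ((j % q : ℕ):ℤ)) ((δ:ℤ) + (d:ℤ) * (j:ℤ)) ∈ S1 :=
      (hS1mem _).mpr ⟨δ, j, hδd, hpδ, by omega, rfl⟩
    have hspec := (hZ _ _ (hdvd1 δ j)).1
    have hjq' : j % q = j := Nat.mod_eq_of_lt hjq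
    have h2' : (a:ℤ) ∣ ((δ:ℤ) + (d:ℤ)*((j % q : ℕ):ℤ)) - ρ := by
      rw [hjq']
      rw [haqZ]
      exact hjdvd
    have h3 := dvd_add hspec h2'
    rw [sub_add_sub_cancel] at h3
    exact havoid _ hmem h3
  have cov1b : ∀ σ : ℤ, (∀ x ∈ S1, ¬ ((b:ℤ) ∣ x - σ)) → (p:ℤ) ∣ σ := by
    intro σ havoid
    by_contra hpσ
    obtain ⟨δ, hδd, hdσδ⟩ := hgetδ σ
    have hpδσ : (p:ℤ) ∣ σ - (δ:ℤ) := dvd_trans hpdZ hdσδ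
    have hpδ : ¬ (p:ℤ) ∣ (δ:ℤ) := fun hcon => hpσ (by
      have := dvd_add hpδσ hcon
      simpa using this)
    obtain ⟨j, hju, hjdvd⟩ := hitmod u (by omega) σ δ hdσδ
    have hmem : Z ((δ:ℤ) + (d:ℤ) * ((j % q : ℕ):ℤ)) ((δ:ℤ) + (d:ℤ) * (j:ℤ)) ∈ S1 :=
      (hS1mem _).mpr ⟨δ, j, hδd, hpδ, hju, rfl⟩
    have hspec := (hZ _ _ (hdvd1 δ j)).2.1
    have h2 : (b:ℤ) ∣ ((δ:ℤ) + (d:ℤ)*(j:ℤ)) - σ := by rw [hbuZ]; exact hjdvd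
    have h3 := dvd_add hspec h2
    rw [sub_add_sub_cancel] at h3
    exact havoid _ hmem h3
  have cov2a : ∀ ρ : ℤ, (∀ x ∈ S2, ¬ ((a:ℤ) ∣ x - ρ)) → (p:ℤ) ∣ ρ := by
    intro ρ havoid
    by_contra hpρ
    obtain ⟨δ, hδd, hdρδ⟩ := hgetδ ρ
    have hpδρ : (p:ℤ) ∣ ρ - (δ:ℤ) := dvd_trans hpdZ hdρδ
    have hpδ : ¬ (p:ℤ) ∣ (δ:ℤ) := fun hcon => hpρ (by
      have := dvd_add hpδρ hcon
      simpa using this)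
    obtain ⟨j, hjq, hjdvd⟩ := hitmod q (by omega) ρ δ hdρδ
    have h2 : (a:ℤ) ∣ ((δ:ℤ) + (d:ℤ)*(j:ℤ)) - ρ := by rw [haqZ]; exact hjdvd
    by_cases hcase : (p:ℤ) ∣ ((δ:ℤ) - 1)
    · have hmem : Z ((δ:ℤ) + (d:ℤ) * (j:ℤ)) (δ:ℤ) ∈ S2 := by
        rw [hS2mem]
        exact Or.inr (Or.inr ((hS23mem _).mpr ⟨δ, j, hδd, hcase, hjq, rfl⟩))
      have hspec := (hZ _ _ (hdvd3 δ j)).1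
      have h3 := dvd_add hspec h2
      rw [sub_add_sub_cancel] at h3
      exact havoid _ hmem h3
    · have hmem : Z ((δ:ℤ) + (d:ℤ) * ((j % q : ℕ):ℤ)) ((δ:ℤ) + (d:ℤ) * (j:ℤ)) ∈ S2 := by
        rw [hS2mem]
        exact Or.inl ((hS21mem _).mpr ⟨δ, j, hδd, ⟨hpδ, hcase⟩, by omega, rfl⟩)
      have hspec := (hZ _ _ (hdvd1 δ j)).1
      have hjq' : j % q = j := Nat.mod_eq_of_lt hjq
      have h2' : (a:ℤ) ∣ ((δ:ℤ) + (d:ℤ)*((j % q : ℕ):ℤ)) - ρ := by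
        rw [hjq']
        rw [haqZ]
        exact hjdvd
      have h3 := dvd_add hspec h2'
      rw [sub_add_sub_cancel] at h3
      exact havoid _ hmem h3
  have cov2b : ∀ σ : ℤ, (∀ x ∈ S2, ¬ ((b:ℤ) ∣ x - σ)) → (p:ℤ) ∣ (σ - 1) := by
    intro σ havoid
    by_contra hpσ
    obtain ⟨δ, hδd, hdσδ⟩ := hgetδ σ
    have hpδσ : (p:ℤ) ∣ σ - (δ:ℤ) := dvd_trans hpdZ hdσδ
    have hpδ1 : ¬ (p:ℤ) ∣ ((δ:ℤ) - 1) := fun hcon => hpσ (by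
      have h1 := dvd_add hpδσ hcon
      have h2 : σ - (δ:ℤ) + ((δ:ℤ) - 1) = σ - 1 := by ring
      rwa [h2] at h1)
    obtain ⟨j, hju, hjdvd⟩ := hitmod u (by omega) σ δ hdσδ
    have h2 : (b:ℤ) ∣ ((δ:ℤ) + (d:ℤ)*(j:ℤ)) - σ := by rw [hbuZ]; exact hjdvd
    by_cases hcase : (p:ℤ) ∣ (δ:ℤ)
    · have hmem : Z (if δ = 0 then (d:ℤ) else (δ:ℤ)) ((δ:ℤ) + (d:ℤ) * (j:ℤ)) ∈ S2 := by
        rw [hS2mem]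
        exact Or.inr (Or.inl ((hS22mem _).mpr ⟨δ, j, hδd, hcase, hju, rfl⟩))
      have hspec := (hZ _ _ (hdvd2 δ j)).2.1
      have h3 := dvd_add hspec h2
      rw [sub_add_sub_cancel] at h3
      exact havoid _ hmem h3
    · have hmem : Z ((δ:ℤ) + (d:ℤ) * ((j % q : ℕ):ℤ)) ((δ:ℤ) + (d:ℤ) * (j:ℤ)) ∈ S2 := by
        rw [hS2mem]
        exact Or.inl ((hS21mem _).mpr ⟨δ, j, hδd, ⟨hcase, hpδ1⟩, hju, rfl⟩)
      have hspec := (hZ _ _ (hdvd1 δ j)).2.1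
      have h3 := dvd_add hspec h2
      rw [sub_add_sub_cancel] at h3
      exact havoid _ hmem h3
  -- the final contradiction
  obtain ⟨m, hm0, hadmU⟩ := h (↑S1) (↑S2) S1.finite_toSet S2.finite_toSet hadm1 hadm2
  obtain ⟨r, hr⟩ := hadmU a ha
  have hr1 : ∀ x ∈ S1, ¬ ((a:ℤ) ∣ x - r) := fun x hx hd' =>
    hr x (Set.mem_union_left _ (Finset.mem_coe.mpr hx)) hd'
  have hr2 : ∀ x ∈ S2, ¬ ((a:ℤ) ∣ x - (r - (m:ℤ))) := by
    intro x hx hd'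
    refine hr (x + (m:ℤ)) (Set.mem_union_right _ ⟨x, Finset.mem_coe.mpr hx, rfl⟩) ?_
    have he : x + (m:ℤ) - r = x - (r - (m:ℤ)) := by ring
    rw [he]
    exact hd'
  have hpa1 := cov1a r hr1
  have hpa2 := cov2a (r - (m:ℤ)) hr2
  have hpm : (p:ℤ) ∣ (m:ℤ) := by
    have := dvd_sub hpa1 hpa2
    simpa using this
  obtain ⟨s0, hs0⟩ := hadmU b hb
  have hs1 : ∀ x ∈ S1, ¬ ((b:ℤ) ∣ x - s0) := fun x hx hd' =>
    hs0 x (Set.mem_union_left _ (Finset.mem_coe.mpr hx)) hd'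
  have hs2 : ∀ x ∈ S2, ¬ ((b:ℤ) ∣ x - (s0 - (m:ℤ))) := by
    intro x hx hd'
    refine hs0 (x + (m:ℤ)) (Set.mem_union_right _ ⟨x, Finset.mem_coe.mpr hx, rfl⟩) ?_
    have he : x + (m:ℤ) - s0 = x - (s0 - (m:ℤ)) := by ring
    rw [he]
    exact hd'
  have hq1 := cov1b s0 hs1
  have hq2 := cov2b (s0 - (m:ℤ)) hs2
  have hone : (p:ℤ) ∣ 1 := by
    have h1 := dvd_sub hq1 hq2
    have h2 : s0 - (s0 - (m:ℤ) - 1) = (m:ℤ) + 1 := by ring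
    rw [h2] at h1
    have h3 := dvd_sub h1 hpm
    simpa using h3
  have hone' : (p:ℕ) ∣ 1 := by exact_mod_cast hone
  have := Nat.le_of_dvd one_pos hone'
  omega


/-- If `C ⊆ ℕ \ {1}` is primitive and any two finite `C`-admissible sets can be made
jointly `C`-admissible after translating the second one by some `m ∈ ℕ`, then the
elements of `C` are pairwise coprime. -/
theorem joint_admissibility_implies_coprime (C : Set ℕ)
    (hC2 : ∀ c ∈ C, 2 ≤ c)
    (hprim : ∀ a ∈ C, ∀ b ∈ C, a ∣ b → a = b)
    (h : ∀ A₁ A₂ : Set ℤ, A₁.Finite → A₂.Finite →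
      IsAdmissible C A₁ → IsAdmissible C A₂ →
      ∃ m : ℕ, 0 < m ∧ IsAdmissible C (A₁ ∪ (fun a => a + (m : ℤ)) '' A₂)) :
    ∀ a ∈ C, ∀ b ∈ C, a ≠ b → Nat.Coprime a b := by
  classical
  intro x hx y hy hxy
  by_contra hncop
  have hQ : ∃ n : ℕ, n ∈ C ∧ ∃ x' , x' ∈ C ∧ x' ≠ n ∧ x' < n ∧ ¬ Nat.Coprime x' n := by
    rcases lt_trichotomy x y with h' | h' | h'
    · exact ⟨y, hy, x, hx, hxy, h', hncop⟩
    · exact absurd h' hxy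
    · exact ⟨x, hx, y, hy, hxy.symm, h', fun hc => hncop (Nat.Coprime.symm hc)⟩
  have hdec : DecidablePred (fun n : ℕ => n ∈ C ∧ ∃ x' , x' ∈ C ∧ x' ≠ n ∧ x' < n ∧
      ¬ Nat.Coprime x' n) := Classical.decPred _
  obtain ⟨hbC, a', ha'C, ha'ne, ha'lt, ha'ncop⟩ := Nat.find_spec hQ
  have hmin : ∀ x' ∈ C, ∀ y' ∈ C, x' ≠ y' → x' < Nat.find hQ → y' < Nat.find hQ →
      Nat.Coprime x' y' := by
    intro x' hx' y' hy' hne hxlt hylt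
    by_contra hnc
    rcases lt_trichotomy x' y' with h' | h' | h'
    · exact Nat.find_min hQ hylt ⟨hy', x', hx', hne, h', hnc⟩
    · exact hne h'
    · exact Nat.find_min hQ hxlt ⟨hx', y', hy', hne.symm, h',
        fun hc => hnc (Nat.Coprime.symm hc)⟩
  have hgcd : 1 < Nat.gcd a' (Nat.find hQ) := by
    have h2a := hC2 a' ha'C
    have hpos : 0 < Nat.gcd a' (Nat.find hQ) := Nat.gcd_pos_of_pos_left _ (by omega)
    have hne1 : Nat.gcd a' (Nat.find hQ) ≠ 1 := ha'ncop
    omega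
  exact key_lemma C hC2 hprim a' (Nat.find hQ) ha'C hbC ha'lt hgcd hmin h
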